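/- Let A be an I-modal ririg in which each modal operator m is contractive (m(x) ≤ x) and satisfies m(a∨b) ≤ m(a)∨m(b), and which satisfies the prelinearity identity (a→b) ∨ (b→a) = 1. Then for all a, b ∈ A, the I-filter generated by a ∨ b equals the intersection of the I-filter generated by a and the I-filter generated by b. -/

import Mathlib

/-!
The I-filter generated by an element `a` is the up-set of products `∏ β(a)` of I-blocks applied
to `a`. If `x ≥ ∏_B B(a)` and `x ≥ ∏_C C(b)`, then `x ≥ ∏_{B,C} (B(a) ⊔ C(b))`, because
`(p ⊔ q) * (p ⊔ r) ≤ p ⊔ q * r` in an integral ririg; and each factor dominates the block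
`(B ++ C)(a ⊔ b)`, since blocks are contractive and subadditive for `⊔`.
-/

/-- An integral residuated rig (ririg). -/
class Ririg (A : Type*) extends CommMonoid A, SemilatticeSup A, OrderBot A, OrderTop A, HImp A where
  one_eq_top : (1 : A) = ⊤
  mul_sup : ∀ x y z : A, x * (y ⊔ z) = x * y ⊔ x * z
  mul_bot : ∀ x : A, x * ⊥ = ⊥
  residuation : ∀ a b c : A, a * b ≤ c ↔ a ≤ b ⇨ c

/-- A modal operator on a ririg. -/
def IsModal {A : Type*} [Ririg A] (m : A → A) : Prop :=
  m 1 = 1 ∧ ∀ x y : A, m (x ⇨ y) ≤ m x ⇨ m y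

/-- Interpretation of an I-block (finite composition of modal operators). -/
def blockApp {A ι : Type*} (f : ι → A → A) : List ι → A → A
  | [] => id
  | i :: L => f i ∘ blockApp f L

/-- I-filter. -/
def IsIFilter {A ι : Type*} [Ririg A] (f : ι → A → A) (F : Set A) : Prop :=
  F.Nonempty ∧ (∀ x y : A, x ∈ F → x ≤ y → y ∈ F) ∧
    (∀ x y : A, x ∈ F → y ∈ F → x * y ∈ F) ∧ (∀ i : ι, ∀ x : A, x ∈ F → f i x ∈ F)

/-- Congruence of an I-modal ririg. -/
def IsRirigCon {A ι : Type*} [Ririg A] (f : ι → A → A) (θ : A → A → Prop) : Prop :=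
  Equivalence θ ∧
    (∀ a b c d : A, θ a b → θ c d → θ (a ⊔ c) (b ⊔ d)) ∧
    (∀ a b c d : A, θ a b → θ c d → θ (a * c) (b * d)) ∧
    (∀ a b c d : A, θ a b → θ c d → θ (a ⇨ c) (b ⇨ d)) ∧
    (∀ i : ι, ∀ a b : A, θ a b → θ (f i a) (f i b))

namespace Ririg

variable {A : Type*} [Ririg A]

theorem le_one (x : A) : x ≤ 1 := one_eq_top (A := A) ▸ le_top

theorem mul_le_mul_of_le_left {x y : A} (h : x ≤ y) (z : A) : z * x ≤ z * y := by
  rw [← sup_eq_right.mpr h, mul_sup]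
  exact le_sup_left

instance toIsOrderedMonoid : IsOrderedMonoid A where
  mul_le_mul_left x y h z := by
    rw [mul_comm x, mul_comm y]
    exact mul_le_mul_of_le_left h z
  mul_le_mul_right _ _ h z := mul_le_mul_of_le_left h z

theorem mul_le_left (x y : A) : x * y ≤ x :=
  mul_le_of_le_one_right' (le_one y)

theorem mul_le_right (x y : A) : x * y ≤ y :=
  mul_le_of_le_one_left' (le_one x)

theorem sup_mul_sup_le (p q r : A) : (p ⊔ q) * (p ⊔ r) ≤ p ⊔ q * r :=
  calc (p ⊔ q) * (p ⊔ r) = (p ⊔ q) * p ⊔ (p * r ⊔ q * r) := by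
        rw [mul_sup, mul_comm (p ⊔ q) r, mul_sup, mul_comm r p, mul_comm r q]
    _ ≤ p ⊔ q * r := sup_le ((mul_le_right _ _).trans le_sup_left)
        (sup_le ((mul_le_left _ _).trans le_sup_left) le_sup_right)

theorem prod_map_sup_le {β : Type*} (p : A) (M : List β) (h : β → A) :
    (M.map fun j => p ⊔ h j).prod ≤ p ⊔ (M.map h).prod := by
  induction M with
  | nil => simp [le_one]
  | cons j M ih =>
    simp only [List.map_cons, List.prod_cons]
    exact (mul_le_mul_of_le_left ih _).trans (sup_mul_sup_le p (h j) _)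

theorem prod_map_prod_map_sup_le {α β : Type*} (L : List α) (M : List β) (g : α → A)
    (h : β → A) :
    (L.map fun i => (M.map fun j => g i ⊔ h j).prod).prod ≤ (L.map g).prod ⊔ (M.map h).prod := by
  induction L with
  | nil => simp [le_one]
  | cons i L ih =>
    simp only [List.map_cons, List.prod_cons]
    calc (M.map fun j => g i ⊔ h j).prod * (L.map fun i => (M.map fun j => g i ⊔ h j).prod).prod
        ≤ ((M.map h).prod ⊔ g i) * ((M.map h).prod ⊔ (L.map g).prod) := by
          rw [sup_comm, sup_comm (M.map h).prod]
          exact mul_le_mul' (prod_map_sup_le _ _ _) ih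
      _ ≤ g i * (L.map g).prod ⊔ (M.map h).prod := by
          rw [sup_comm _ (M.map h).prod]
          exact sup_mul_sup_le _ _ _

end Ririg

open Ririg

section Block

variable {A ι : Type*} {f : ι → A → A}

theorem blockApp_cons (i : ι) (B : List ι) (x : A) :
    blockApp f (i :: B) x = f i (blockApp f B x) := rfl

theorem blockApp_append (B C : List ι) (x : A) :
    blockApp f (B ++ C) x = blockApp f B (blockApp f C x) := by
  induction B with
  | nil => rfl
  | cons i B ih => simp only [List.cons_append, blockApp_cons, ih]

end Block

section Modal

variable {A ι : Type*} [Ririg A]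

theorem IsModal.monotone {m : A → A} (hm : IsModal m) : Monotone m := by
  intro x y h
  have himp : x ⇨ y = 1 := (le_one _).antisymm ((residuation _ _ _).mp (by rwa [one_mul]))
  have := hm.2 x y
  rw [himp, hm.1, ← residuation, one_mul] at this
  exact this

theorem IsModal.mul_le {m : A → A} (hm : IsModal m) (x y : A) : m x * m y ≤ m (x * y) :=
  (residuation _ _ _).mpr
    ((hm.monotone ((residuation x y _).mp le_rfl)).trans (hm.2 y (x * y)))

theorem IsModal.prod_map_le {m : A → A} (hm : IsModal m) (l : List A) :
    (l.map m).prod ≤ m l.prod := by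
  induction l with
  | nil => simp [hm.1]
  | cons x l ih =>
    simp only [List.map_cons, List.prod_cons]
    exact (mul_le_mul_of_le_left ih _).trans (hm.mul_le x l.prod)

variable {f : ι → A → A}

theorem blockApp_monotone (hf : ∀ i, IsModal (f i)) (B : List ι) : Monotone (blockApp f B) := by
  induction B with
  | nil => exact monotone_id
  | cons i B ih => exact (hf i).monotone.comp ih

theorem blockApp_le (hcon : ∀ i x, f i x ≤ x) (B : List ι) (x : A) : blockApp f B x ≤ x := by
  induction B with
  | nil => exact le_rfl
  | cons i B ih => exact (hcon i _).trans ih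

theorem blockApp_sup_le (hf : ∀ i, IsModal (f i)) (hsup : ∀ i a b, f i (a ⊔ b) ≤ f i a ⊔ f i b)
    (B : List ι) (x y : A) : blockApp f B (x ⊔ y) ≤ blockApp f B x ⊔ blockApp f B y := by
  induction B with
  | nil => exact le_rfl
  | cons i B ih => exact ((hf i).monotone ih).trans (hsup i _ _)

theorem blockApp_append_sup_le (hf : ∀ i, IsModal (f i)) (hcon : ∀ i x, f i x ≤ x)
    (hsup : ∀ i a b, f i (a ⊔ b) ≤ f i a ⊔ f i b) (B C : List ι) (a b : A) :
    blockApp f (B ++ C) (a ⊔ b) ≤ blockApp f B a ⊔ blockApp f C b :=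
  calc blockApp f (B ++ C) (a ⊔ b)
      ≤ blockApp f B (blockApp f C a ⊔ blockApp f C b) := by
        rw [blockApp_append]
        exact blockApp_monotone hf B (blockApp_sup_le hf hsup C a b)
    _ ≤ blockApp f B (blockApp f C a) ⊔ blockApp f B (blockApp f C b) :=
        blockApp_sup_le hf hsup B _ _
    _ ≤ blockApp f B a ⊔ blockApp f C b :=
        sup_le_sup (blockApp_monotone hf B (blockApp_le hcon C a)) (blockApp_le hcon B _)

end Modal

section GeneratedFilter

variable {A ι : Type*} [Ririg A] {f : ι → A → A}

def genIFilter (f : ι → A → A) (a : A) : Set A :=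
  {y | ∃ L : List (List ι), (L.map fun B => blockApp f B a).prod ≤ y}

theorem mem_genIFilter_self (a : A) : a ∈ genIFilter f a :=
  ⟨[[]], by simp [blockApp]⟩

theorem isIFilter_genIFilter (hf : ∀ i, IsModal (f i)) (a : A) : IsIFilter f (genIFilter f a) := by
  refine ⟨⟨a, mem_genIFilter_self a⟩, ?_, ?_, ?_⟩
  · rintro x y ⟨L, hL⟩ hxy
    exact ⟨L, hL.trans hxy⟩
  · rintro x y ⟨L, hL⟩ ⟨M, hM⟩
    refine ⟨L ++ M, ?_⟩
    rw [List.map_append, List.prod_append]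
    exact mul_le_mul' hL hM
  · rintro i x ⟨L, hL⟩
    refine ⟨L.map (i :: ·), ?_⟩
    calc ((L.map (i :: ·)).map fun B => blockApp f B a).prod
        = ((L.map fun B => blockApp f B a).map (f i)).prod := by
          simp only [List.map_map, Function.comp_def, blockApp_cons]
      _ ≤ f i x := ((hf i).prod_map_le _).trans ((hf i).monotone hL)

theorem IsIFilter.one_mem {F : Set A} (hF : IsIFilter f F) : (1 : A) ∈ F :=
  hF.1.elim fun z hz => hF.2.1 z 1 hz (le_one z)

theorem IsIFilter.blockApp_mem {F : Set A} (hF : IsIFilter f F) (B : List ι) {x : A}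
    (hx : x ∈ F) : blockApp f B x ∈ F := by
  induction B with
  | nil => exact hx
  | cons i B ih => exact hF.2.2.2 i _ ih

theorem IsIFilter.prod_mem {F : Set A} (hF : IsIFilter f F) {l : List A} (h : ∀ z ∈ l, z ∈ F) :
    l.prod ∈ F := by
  induction l with
  | nil => exact hF.one_mem
  | cons z l ih =>
    rw [List.prod_cons]
    exact hF.2.2.1 _ _ (h z List.mem_cons_self) (ih fun w hw => h w (List.mem_cons_of_mem z hw))

theorem genIFilter_subset {F : Set A} (hF : IsIFilter f F) {a : A} (ha : a ∈ F) :
    genIFilter f a ⊆ F := by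
  rintro y ⟨L, hL⟩
  refine hF.2.1 _ y (hF.prod_mem ?_) hL
  simp only [List.mem_map]
  rintro _ ⟨B, -, rfl⟩
  exact hF.blockApp_mem B ha

theorem sInter_eq_genIFilter (hf : ∀ i, IsModal (f i)) (a : A) :
    ⋂₀ {F : Set A | IsIFilter f F ∧ a ∈ F} = genIFilter f a :=
  (Set.sInter_subset_of_mem
    (show genIFilter f a ∈ {F | IsIFilter f F ∧ a ∈ F} from
      ⟨isIFilter_genIFilter hf a, mem_genIFilter_self a⟩)).antisymm
    (Set.subset_sInter fun _ hF => genIFilter_subset hF.1 hF.2)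

theorem genIFilter_inter_subset (hf : ∀ i, IsModal (f i)) (hcon : ∀ i x, f i x ≤ x)
    (hsup : ∀ i a b, f i (a ⊔ b) ≤ f i a ⊔ f i b) (a b : A) :
    genIFilter f a ∩ genIFilter f b ⊆ genIFilter f (a ⊔ b) := by
  rintro x ⟨⟨L, hL⟩, ⟨M, hM⟩⟩
  refine ⟨(L.map fun B => M.map (B ++ ·)).flatten, ?_⟩
  calc (((L.map fun B => M.map (B ++ ·)).flatten).map fun B => blockApp f B (a ⊔ b)).prod
      = (L.map fun B => (M.map fun C => blockApp f (B ++ C) (a ⊔ b)).prod).prod := by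
        simp only [List.map_flatten, List.prod_flatten, List.map_map, Function.comp_def]
    _ ≤ (L.map fun B => (M.map fun C => blockApp f B a ⊔ blockApp f C b).prod).prod :=
        List.prod_le_prod' fun B _ => List.prod_le_prod' fun C _ =>
          blockApp_append_sup_le hf hcon hsup B C a b
    _ ≤ x := (prod_map_prod_map_sup_le L M _ _).trans (sup_le hL hM)

end GeneratedFilter

theorem stmt16_general {A ι : Type*} [Ririg A] (f : ι → A → A) (hf : ∀ i, IsModal (f i))
    (hcon : ∀ (i : ι) (x : A), f i x ≤ x)
    (hsup : ∀ (i : ι) (a b : A), f i (a ⊔ b) ≤ f i a ⊔ f i b)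
    (a b : A) :
    ⋂₀ {F : Set A | IsIFilter f F ∧ a ⊔ b ∈ F} =
      ⋂₀ {F : Set A | IsIFilter f F ∧ a ∈ F} ∩ ⋂₀ {F : Set A | IsIFilter f F ∧ b ∈ F} := by
  simp only [sInter_eq_genIFilter hf]
  have hsub : ∀ {c : A}, c ≤ a ⊔ b → genIFilter f (a ⊔ b) ⊆ genIFilter f c := fun hc =>
    genIFilter_subset (isIFilter_genIFilter hf _)
      ((isIFilter_genIFilter hf _).2.1 _ _ (mem_genIFilter_self _) hc)
  exact (Set.subset_inter (hsub le_sup_left) (hsub le_sup_right)).antisymm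
    (genIFilter_inter_subset hf hcon hsup a b)

theorem stmt16 {A ι : Type*} [Ririg A] (f : ι → A → A) (hf : ∀ i, IsModal (f i))
    (hcon : ∀ (i : ι) (x : A), f i x ≤ x)
    (hsup : ∀ (i : ι) (a b : A), f i (a ⊔ b) ≤ f i a ⊔ f i b)
    (hprel : ∀ a b : A, (a ⇨ b) ⊔ (b ⇨ a) = 1) (a b : A) :
    ⋂₀ {F : Set A | IsIFilter f F ∧ a ⊔ b ∈ F} =
      ⋂₀ {F : Set A | IsIFilter f F ∧ a ∈ F} ∩ ⋂₀ {F : Set A | IsIFilter f F ∧ b ∈ F} :=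
  stmt16_general f hf hcon hsup a b
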